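/- arXiv:0908.1838 — 4 statements merged into one kernel-verified Lean document; each statement's English description precedes it below -/
import Mathlib

section
/- Let (Ω, P) be a probability space and k a positive integer. Suppose {W_{n,ε}} (indexed by n ∈ ℕ and ε > 0), {W_n}, {W_ε} and W are random vectors Ω → ℝ^k such that: (i) lim_{ε→0} limsup_{n→∞} P(W_{n,ε} ≠ W_n) = 0; (ii) lim_{ε→0} P(W_ε ≠ W) = 0; and (iii) for every ε > 0, W_{n,ε} converges in distribution to W_ε as n → ∞. Then W_n converges in distribution to W as n → ∞. -/
/-!
Fix a bounded continuous test function `f`. Changing a random vector on an event of probability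
`p` moves `E f(·)` by at most `2 ‖f‖ p`. Hence for small `ε`, hypothesis (i) keeps
`E f(W_{n,ε})` close to `E f(W_n)` for all large `n`, and (ii) keeps `E f(W_ε)` close to `E f(W)`;
together with (iii) for one such `ε`, this is an `ε/3` argument.
-/

open MeasureTheory Filter Topology
open scoped ENNReal

theorem tendsto_of_tendsto_of_limsup_edist_tendsto_zero {ι κ β : Type*}
    [PseudoEMetricSpace β] {l : Filter ι} {l' : Filter κ} [l'.NeBot]
    {u : ι → β} {v : β} {x : κ → ι → β} {y : κ → β}
    (hx : ∀ᶠ ε in l', Tendsto (x ε) l (𝓝 (y ε)))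
    (hxu : Tendsto (fun ε => limsup (fun n => edist (x ε n) (u n)) l) l' (𝓝 0))
    (hy : Tendsto y l' (𝓝 v)) :
    Tendsto u l (𝓝 v) := by
  refine EMetric.tendsto_nhds.2 fun δ hδ => ?_
  have hδ3 : 0 < δ / 3 := ENNReal.div_pos hδ.ne' ENNReal.ofNat_ne_top
  obtain ⟨ε, hxε, hxuε, hyε⟩ :=
    (hx.and ((hxu.eventually (gt_mem_nhds hδ3)).and (EMetric.tendsto_nhds.1 hy _ hδ3))).exists
  filter_upwards [eventually_lt_of_limsup_lt hxuε, EMetric.tendsto_nhds.1 hxε _ hδ3]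
    with n hxun hxyn
  calc edist (u n) v ≤ edist (u n) (x ε n) + edist (x ε n) (y ε) + edist (y ε) v :=
        edist_triangle4 _ _ _ _
    _ < δ / 3 + δ / 3 + δ / 3 := by
        rw [edist_comm] at hxun
        exact ENNReal.add_lt_add (ENNReal.add_lt_add hxun hxyn) hyε
    _ = δ := ENNReal.add_thirds δ

namespace BoundedContinuousFunction

variable {Ω X : Type*} [MeasurableSpace Ω] {P : Measure Ω} [IsFiniteMeasure P]
  [TopologicalSpace X] [MeasurableSpace X] [OpensMeasurableSpace X]

theorem integrable_comp (f : X →ᵇ ℝ) {g : Ω → X} (hg : AEMeasurable g P) :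
    Integrable (fun ω => f (g ω)) P :=
  (integrable_const ‖f‖).mono'
    (f.continuous.measurable.comp_aemeasurable hg).aestronglyMeasurable
    (ae_of_all _ fun _ => f.norm_coe_le_norm _)

theorem edist_integral_comp_le (f : X →ᵇ ℝ) {g h : Ω → X}
    (hg : AEMeasurable g P) (hh : AEMeasurable h P) :
    edist (∫ ω, f (g ω) ∂P) (∫ ω, f (h ω) ∂P) ≤ 2 * ‖f‖ₑ * P {ω | g ω ≠ h ω} := by
  set s := {ω | g ω ≠ h ω}
  have enorm_apply_le (x : X) : ‖f x‖ₑ ≤ ‖f‖ₑ :=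
    enorm_le_iff_norm_le.2 (f.norm_coe_le_norm x)
  have pointwise (ω : Ω) :
      ‖f (g ω) - f (h ω)‖ₑ ≤ s.indicator (fun _ => 2 * ‖f‖ₑ) ω := by
    by_cases hω : g ω = h ω
    · simp [hω]
    · rw [Set.indicator_of_mem hω, two_mul]
      exact enorm_sub_le.trans (add_le_add (enorm_apply_le _) (enorm_apply_le _))
  rw [edist_eq_enorm_sub,
    ← integral_sub (f.integrable_comp hg) (f.integrable_comp hh)]
  calc ‖∫ ω, f (g ω) - f (h ω) ∂P‖ₑ ≤ ∫⁻ ω, ‖f (g ω) - f (h ω)‖ₑ ∂P :=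
        enorm_integral_le_lintegral_enorm _
    _ ≤ ∫⁻ ω, s.indicator (fun _ => 2 * ‖f‖ₑ) ω ∂P := lintegral_mono pointwise
    _ ≤ 2 * ‖f‖ₑ * P s := lintegral_indicator_const_le _ _

end BoundedContinuousFunction

theorem changepoint_sandwich_convergence_in_distribution_general
    {Ω : Type*} [MeasurableSpace Ω] (P : Measure Ω) [IsProbabilityMeasure P]
    (k : ℕ)
    (Wne : ℕ → ℝ → Ω → (Fin k → ℝ)) (Wn : ℕ → Ω → (Fin k → ℝ))
    (We : ℝ → Ω → (Fin k → ℝ)) (W : Ω → (Fin k → ℝ))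
    (hWne : ∀ n ε, Measurable (Wne n ε)) (hWn : ∀ n, Measurable (Wn n))
    (hWe : ∀ ε, Measurable (We ε)) (hW : Measurable W)
    (h1 : Tendsto (fun ε : ℝ => Filter.limsup (fun n => P {ω | Wne n ε ω ≠ Wn n ω}) atTop)
        (𝓝[>] 0) (𝓝 0))
    (h2 : Tendsto (fun ε : ℝ => P {ω | We ε ω ≠ W ω}) (𝓝[>] 0) (𝓝 0))
    (h3 : ∀ ε : ℝ, 0 < ε → ∀ f : BoundedContinuousFunction (Fin k → ℝ) ℝ,
        Tendsto (fun n => ∫ ω, f (Wne n ε ω) ∂P) atTop (𝓝 (∫ ω, f (We ε ω) ∂P))) :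
    ∀ f : BoundedContinuousFunction (Fin k → ℝ) ℝ,
      Tendsto (fun n => ∫ ω, f (Wn n ω) ∂P) atTop (𝓝 (∫ ω, f (W ω) ∂P)) := by
  intro f
  have hf : 2 * ‖f‖ₑ ≠ ∞ := ENNReal.mul_ne_top ENNReal.ofNat_ne_top enorm_ne_top
  have squeeze {q r : ℝ → ℝ≥0∞} (hr : Tendsto r (𝓝[>] 0) (𝓝 0))
      (hqr : ∀ ε, q ε ≤ 2 * ‖f‖ₑ * r ε) : Tendsto q (𝓝[>] 0) (𝓝 0) :=
    tendsto_of_tendsto_of_tendsto_of_le_of_le tendsto_const_nhds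
      (by simpa using ENNReal.Tendsto.const_mul hr (Or.inr hf)) (fun _ => zero_le) hqr
  refine tendsto_of_tendsto_of_limsup_edist_tendsto_zero (l' := 𝓝[>] 0)
    (x := fun ε n => ∫ ω, f (Wne n ε ω) ∂P) (y := fun ε => ∫ ω, f (We ε ω) ∂P)
    (eventually_mem_nhdsWithin.mono fun ε hε => h3 ε hε f) (squeeze h1 fun ε => ?_)
    (tendsto_iff_edist_tendsto_0.2 (squeeze h2 fun ε =>
      f.edist_integral_comp_le (hWe ε).aemeasurable hW.aemeasurable))
  rw [← ENNReal.limsup_const_mul_of_ne_top hf]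
  exact limsup_le_limsup (Eventually.of_forall fun n =>
    f.edist_integral_comp_le (hWne n ε).aemeasurable (hWn n).aemeasurable)

/-- Lemma 3.3: if `W_{n,ε}` coincides with `W_n` with probability tending to 1 (as n → ∞ then
ε → 0), `W_ε` coincides with `W` with probability tending to 1 as ε → 0, and for each ε > 0
`W_{n,ε} →d W_ε`, then `W_n →d W`. Convergence in distribution is expressed through bounded
continuous test functions. -/
theorem changepoint_sandwich_convergence_in_distribution
    {Ω : Type*} [MeasurableSpace Ω] (P : Measure Ω) [IsProbabilityMeasure P]
    (k : ℕ) (hk : 0 < k)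
    (Wne : ℕ → ℝ → Ω → (Fin k → ℝ)) (Wn : ℕ → Ω → (Fin k → ℝ))
    (We : ℝ → Ω → (Fin k → ℝ)) (W : Ω → (Fin k → ℝ))
    (hWne : ∀ n ε, Measurable (Wne n ε)) (hWn : ∀ n, Measurable (Wn n))
    (hWe : ∀ ε, Measurable (We ε)) (hW : Measurable W)
    (h1 : Tendsto (fun ε : ℝ => Filter.limsup (fun n => P {ω | Wne n ε ω ≠ Wn n ω}) atTop)
        (𝓝[>] 0) (𝓝 0))
    (h2 : Tendsto (fun ε : ℝ => P {ω | We ε ω ≠ W ω}) (𝓝[>] 0) (𝓝 0))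
    (h3 : ∀ ε : ℝ, 0 < ε → ∀ f : BoundedContinuousFunction (Fin k → ℝ) ℝ,
        Tendsto (fun n => ∫ ω, f (Wne n ε ω) ∂P) atTop (𝓝 (∫ ω, f (We ε ω) ∂P))) :
    ∀ f : BoundedContinuousFunction (Fin k → ℝ) ℝ,
      Tendsto (fun n => ∫ ω, f (Wn n ω) ∂P) atTop (𝓝 (∫ ω, f (W ω) ∂P)) :=
  changepoint_sandwich_convergence_in_distribution_general P k Wne Wn We W hWne hWn hWe hW h1 h2 h3
end

section
/- Let h > 0 and t ∈ ℝ, let U be a random variable uniformly distributed on [t − h, t + h], and let ε be an integrable real random variable with E[ε] = 0, independent of U. Let α₀, β₀, c ∈ ℝ and let d⁰, d ∈ [t − h, t + h]. Define W = α₀ 1(U ≤ d⁰) + β₀ 1(U > d⁰) + ε. Then E[ (W − c)(1(U ≤ d) − 1(U ≤ d⁰)) ] = ( (β₀ − c) max(d − d⁰, 0) + (c − α₀) max(d⁰ − d, 0) ) / (2h). -/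
/-!
Pointwise, `(μ(U) − c)(1(U ≤ d) − 1(U ≤ d⁰))` is `β₀ − c` on `{d⁰ < U ≤ d}`,
`c − α₀` on `{d < U ≤ d⁰}` and `0` elsewhere; under the uniform law these events have
probability `max(d − d⁰, 0) / 2h` and `max(d⁰ − d, 0) / 2h`. The noise term
`ε (1(U ≤ d) − 1(U ≤ d⁰))` has mean `E[ε] · E[1(U ≤ d) − 1(U ≤ d⁰)] = 0` by independence.
-/

open MeasureTheory ProbabilityTheory

lemma stump_sub_mul_indicator_sub (α₀ β₀ c d0 d u : ℝ) :
    (α₀ * (if u ≤ d0 then (1 : ℝ) else 0) + β₀ * (if d0 < u then (1 : ℝ) else 0) - c)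
        * ((if u ≤ d then (1 : ℝ) else 0) - (if u ≤ d0 then (1 : ℝ) else 0))
      = (β₀ - c) * (Set.Ioc d0 d).indicator 1 u
        + (c - α₀) * (Set.Ioc d d0).indicator 1 u := by
  by_cases h0 : u ≤ d0 <;> by_cases h1 : u ≤ d <;> simp [h0, h1, lt_of_not_ge]

section IndicatorComp

variable {Ω α : Type*} [MeasurableSpace Ω] [MeasurableSpace α] {μ : Measure Ω} {X : Ω → α}
  {s : Set α}

lemma integral_indicator_one_comp (hX : Measurable X) (hs : MeasurableSet s) :
    ∫ ω, s.indicator 1 (X ω) ∂μ = μ.real (X ⁻¹' s) := by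
  simp_rw [← Set.indicator_comp_right X]
  exact integral_indicator_one (hX hs)

lemma integrable_indicator_one_comp [IsFiniteMeasure μ] (hX : Measurable X)
    (hs : MeasurableSet s) : Integrable (fun ω => s.indicator (1 : α → ℝ) (X ω)) μ := by
  simp_rw [← Set.indicator_comp_right X]
  exact (integrable_const 1).indicator (hX hs)

end IndicatorComp

lemma ProbabilityTheory.IndepFun.integral_mul_eq_zero_of_integral_eq_zero {Ω : Type*}
    [MeasurableSpace Ω] {μ : Measure Ω} {X Y : Ω → ℝ} (hXY : IndepFun X Y μ)
    (hX : AEStronglyMeasurable X μ) (hY : AEStronglyMeasurable Y μ) (hX0 : ∫ ω, X ω ∂μ = 0) :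
    ∫ ω, X ω * Y ω ∂μ = 0 := by
  simpa [hX0] using hXY.integral_mul_eq_mul_integral hX hY

lemma MeasureTheory.pdf.IsUniform.measureReal_preimage_Ioc {Ω : Type*}
    [MeasurableSpace Ω] {μ : Measure Ω} {X : Ω → ℝ} {a b x y : ℝ} (hab : a < b)
    (hX : pdf.IsUniform X (Set.Icc a b) μ) (hx : a ≤ x) (hy : y ≤ b) :
    μ.real (X ⁻¹' Set.Ioc x y) = max (y - x) 0 / (b - a) := by
  have hvol : volume (Set.Icc a b) = ENNReal.ofReal (b - a) := Real.volume_Icc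
  have hsub : Set.Ioc x y ⊆ Set.Icc a b := fun u hu => ⟨hx.trans hu.1.le, hu.2.trans hy⟩
  rw [measureReal_def,
    hX.measure_preimage (by simp [hvol, hab]) (by simp [hvol]) measurableSet_Ioc,
    Set.inter_eq_self_of_subset_right hsub, Real.volume_Ioc, hvol, ENNReal.toReal_div,
    ENNReal.toReal_ofReal', ENNReal.toReal_ofReal', max_eq_left (sub_nonneg.mpr hab.le)]

theorem stump_population_criterion_formula_general
    {Ω : Type*} [MeasureSpace Ω] [IsProbabilityMeasure (ℙ : Measure Ω)]
    (h t : ℝ) (hh : 0 < h)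
    (U ε : Ω → ℝ) (hU : Measurable U)
    (hunif : MeasureTheory.pdf.IsUniform U (Set.Icc (t - h) (t + h)) ℙ)
    (hint : Integrable ε ℙ) (hmean : ∫ ω, ε ω = 0)
    (hind : IndepFun U ε ℙ)
    (α₀ β₀ c d0 d : ℝ)
    (hd0 : d0 ∈ Set.Icc (t - h) (t + h)) (hd : d ∈ Set.Icc (t - h) (t + h)) :
    (∫ ω, ((α₀ * (if U ω ≤ d0 then (1 : ℝ) else 0)
          + β₀ * (if d0 < U ω then (1 : ℝ) else 0) + ε ω) - c)
        * ((if U ω ≤ d then (1 : ℝ) else 0) - (if U ω ≤ d0 then (1 : ℝ) else 0)))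
      = ((β₀ - c) * max (d - d0) 0 + (c - α₀) * max (d0 - d) 0) / (2 * h) := by
  set g : ℝ → ℝ := fun u =>
    (if u ≤ d then (1 : ℝ) else 0) - (if u ≤ d0 then (1 : ℝ) else 0)
  have hg : Measurable g := (measurable_const.ite measurableSet_Iic measurable_const).sub
    (measurable_const.ite measurableSet_Iic measurable_const)
  have hgU : Integrable (fun ω => g (U ω)) ℙ :=
    ((integrable_indicator_one_comp hU (measurableSet_Iic (a := d))).sub
      (integrable_indicator_one_comp hU (measurableSet_Iic (a := d0)))).congr <|
        .of_forall fun ω => by simp [g, Set.indicator_apply]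
  have hindg : IndepFun ε (fun ω => g (U ω)) ℙ := hind.symm.comp measurable_id hg
  have hnoise_int : Integrable (fun ω => ε ω * g (U ω)) ℙ := hindg.integrable_mul hint hgU
  have hnoise : ∫ ω, ε ω * g (U ω) = 0 :=
    hindg.integral_mul_eq_zero_of_integral_eq_zero hint.1 hgU.1 hmean
  have hIoc (x y : ℝ) :=
    integrable_indicator_one_comp (μ := ℙ) hU (measurableSet_Ioc (a := x) (b := y))
  have hlt : t - h < t + h := by linarith
  calc _ = ∫ ω, ((β₀ - c) * (Set.Ioc d0 d).indicator 1 (U ω)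
            + (c - α₀) * (Set.Ioc d d0).indicator 1 (U ω)) + ε ω * g (U ω) := by
          congr 1; funext ω
          linear_combination stump_sub_mul_indicator_sub α₀ β₀ c d0 d (U ω)
    _ = (β₀ - c) * (ℙ : Measure Ω).real (U ⁻¹' Set.Ioc d0 d)
          + (c - α₀) * (ℙ : Measure Ω).real (U ⁻¹' Set.Ioc d d0) := by
          rw [integral_add (((hIoc _ _).const_mul _).fun_add ((hIoc _ _).const_mul _)) hnoise_int,
            hnoise, add_zero,
            integral_add ((hIoc _ _).const_mul _) ((hIoc _ _).const_mul _),
            integral_const_mul, integral_const_mul,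
            integral_indicator_one_comp hU measurableSet_Ioc,
            integral_indicator_one_comp hU measurableSet_Ioc]
    _ = _ := by
          rw [hunif.measureReal_preimage_Ioc hlt hd0.1 hd.2,
            hunif.measureReal_preimage_Ioc hlt hd.1 hd0.2]
          ring

/-- Population criterion in the stump change-point model: with `U ~ Uniform[t−h, t+h]`,
`ε` integrable, centered and independent of `U`, and
`W = α₀ 1(U ≤ d⁰) + β₀ 1(U > d⁰) + ε`, one has
`E[(W − c)(1(U ≤ d) − 1(U ≤ d⁰))]
  = ((β₀ − c) max(d − d⁰, 0) + (c − α₀) max(d⁰ − d, 0)) / (2h)`. -/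
theorem stump_population_criterion_formula
    {Ω : Type*} [MeasureSpace Ω] [IsProbabilityMeasure (ℙ : Measure Ω)]
    (h t : ℝ) (hh : 0 < h)
    (U ε : Ω → ℝ) (hU : Measurable U) (hε : Measurable ε)
    (hunif : MeasureTheory.pdf.IsUniform U (Set.Icc (t - h) (t + h)) ℙ)
    (hint : Integrable ε ℙ) (hmean : ∫ ω, ε ω = 0)
    (hind : IndepFun U ε ℙ)
    (α₀ β₀ c d0 d : ℝ)
    (hd0 : d0 ∈ Set.Icc (t - h) (t + h)) (hd : d ∈ Set.Icc (t - h) (t + h)) :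
    (∫ ω, ((α₀ * (if U ω ≤ d0 then (1 : ℝ) else 0)
          + β₀ * (if d0 < U ω then (1 : ℝ) else 0) + ε ω) - c)
        * ((if U ω ≤ d then (1 : ℝ) else 0) - (if U ω ≤ d0 then (1 : ℝ) else 0)))
      = ((β₀ - c) * max (d - d0) 0 + (c - α₀) * max (d0 - d) 0) / (2 * h) :=
  stump_population_criterion_formula_general h t hh U ε hU hunif hint hmean hind α₀ β₀ c d0 d hd0 hd
end

section
/- Let h > 0 and t ∈ ℝ, let U be a random variable uniformly distributed on [t − h, t + h], and let ε be an integrable real random variable with E[ε] = 0, independent of U. Let α₀, β₀, c ∈ ℝ with α₀ < c < β₀, and let d⁰ ∈ [t − h, t + h]. Define W = α₀ 1(U ≤ d⁰) + β₀ 1(U > d⁰) + ε, and for d ∈ [t − h, t + h] set M(d) = E[ (W − c)(1(U ≤ d) − 1(U ≤ d⁰)) ]. Then M(d⁰) = 0 and M(d) > 0 for every d ∈ [t − h, t + h] with d ≠ d⁰; that is, d⁰ is the unique minimizer of M on [t − h, t + h]. -/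
open MeasureTheory ProbabilityTheory

/-! For `d < d⁰` the contrast vanishes off `{d < U ≤ d⁰}`, where `W = α₀ + ε`, so
`M d = (c - α₀) P(d < U ≤ d⁰) - E[1(d < U ≤ d⁰) ε]`. Independence and `E ε = 0` kill the second
term, and the uniform law gives `P(d < U ≤ d⁰) = (d⁰ - d) / 2h > 0`. The case `d > d⁰` is
symmetric, with `β₀ - c` in place of `c - α₀`. -/

theorem measureReal_preimage_Ioc_of_isUniform_Icc {Ω : Type*} [MeasurableSpace Ω]
    {μ : Measure Ω} {U : Ω → ℝ} {l r a b : ℝ} (hlr : l < r)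
    (hU : pdf.IsUniform U (Set.Icc l r) μ) (hla : l ≤ a) (hab : a ≤ b) (hbr : b ≤ r) :
    μ.real (U ⁻¹' Set.Ioc a b) = (b - a) / (r - l) := by
  have hvol : volume (Set.Icc l r) = ENNReal.ofReal (r - l) := Real.volume_Icc
  have hsub : Set.Ioc a b ⊆ Set.Icc l r :=
    Set.Ioc_subset_Icc_self.trans (Set.Icc_subset_Icc hla hbr)
  rw [measureReal_def, hU.measure_preimage (by simp [hvol, hlr]) (by simp [hvol])
    measurableSet_Ioc, Set.inter_eq_self_of_subset_right hsub, Real.volume_Ioc, hvol,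
    ENNReal.toReal_div, ENNReal.toReal_ofReal (by linarith), ENNReal.toReal_ofReal (by linarith)]

theorem ProbabilityTheory.IndepFun.integral_indicator_comp_mul_const_add {Ω β : Type*}
    [MeasurableSpace Ω] [MeasurableSpace β] {μ : Measure Ω} [IsProbabilityMeasure μ]
    {U : Ω → β} {ε : Ω → ℝ}
    (hind : IndepFun U ε μ) (hU : Measurable U) (hε : Integrable ε μ)
    (hmean : ∫ ω, ε ω ∂μ = 0) {A : Set β} (hA : MeasurableSet A) (K : ℝ) :
    ∫ ω, A.indicator (1 : β → ℝ) (U ω) * (K + ε ω) ∂μ = μ.real (U ⁻¹' A) * K := by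
  have hindA : IndepFun (fun ω => A.indicator (1 : β → ℝ) (U ω)) (fun ω => K + ε ω) μ :=
    hind.comp (measurable_one.indicator hA) (measurable_const_add K)
  rw [hindA.integral_fun_mul_eq_mul_integral
      ((measurable_one.indicator hA).comp hU).aestronglyMeasurable
      ((integrable_const K).add hε).aestronglyMeasurable,
    integral_add (integrable_const K) hε, hmean, add_zero, integral_const, probReal_univ,
    one_smul]
  simp_rw [← Set.indicator_comp_right, Pi.one_comp]
  rw [integral_indicator_one (hU hA)]

/-- `M d` is the expectation of `stumpContrast α₀ β₀ c d0 d U ε`. -/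
noncomputable def stumpContrast (α₀ β₀ c d0 d u e : ℝ) : ℝ :=
  ((α₀ * (if u ≤ d0 then (1 : ℝ) else 0) + β₀ * (if d0 < u then (1 : ℝ) else 0) + e) - c)
    * ((if u ≤ d then (1 : ℝ) else 0) - (if u ≤ d0 then (1 : ℝ) else 0))

section stumpContrast

variable {α₀ β₀ c d0 d : ℝ}

theorem stumpContrast_self (u e : ℝ) : stumpContrast α₀ β₀ c d0 d0 u e = 0 := by
  simp [stumpContrast]

theorem stumpContrast_of_lt (hd : d < d0) (u e : ℝ) :
    stumpContrast α₀ β₀ c d0 d u e = -((Set.Ioc d d0).indicator 1 u * (α₀ - c + e)) := by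
  simp only [stumpContrast, Set.indicator_apply, Set.mem_Ioc, Pi.one_apply]
  grind

theorem stumpContrast_of_gt (hd : d0 < d) (u e : ℝ) :
    stumpContrast α₀ β₀ c d0 d u e = (Set.Ioc d0 d).indicator 1 u * (β₀ - c + e) := by
  simp only [stumpContrast, Set.indicator_apply, Set.mem_Ioc, Pi.one_apply]
  grind

end stumpContrast

theorem stump_population_criterion_unique_minimizer_general
    {Ω : Type*} [MeasureSpace Ω] [IsProbabilityMeasure (ℙ : Measure Ω)]
    (h t : ℝ) (hh : 0 < h)
    (U ε : Ω → ℝ) (hU : Measurable U)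
    (hunif : MeasureTheory.pdf.IsUniform U (Set.Icc (t - h) (t + h)) ℙ)
    (hint : Integrable ε ℙ) (hmean : ∫ ω, ε ω = 0)
    (hind : IndepFun U ε ℙ)
    (α₀ β₀ c d0 : ℝ) (hαc : α₀ < c) (hcβ : c < β₀)
    (hd0 : d0 ∈ Set.Icc (t - h) (t + h))
    (M : ℝ → ℝ)
    (hM : ∀ d : ℝ, M d =
      ∫ ω, ((α₀ * (if U ω ≤ d0 then (1 : ℝ) else 0)
          + β₀ * (if d0 < U ω then (1 : ℝ) else 0) + ε ω) - c)
        * ((if U ω ≤ d then (1 : ℝ) else 0) - (if U ω ≤ d0 then (1 : ℝ) else 0))) :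
    M d0 = 0 ∧ ∀ d ∈ Set.Icc (t - h) (t + h), d ≠ d0 → 0 < M d := by
  have hM' : ∀ d, M d = ∫ ω, stumpContrast α₀ β₀ c d0 d (U ω) (ε ω) := hM
  have hprob : ∀ a b, t - h ≤ a → a < b → b ≤ t + h →
      0 < (ℙ : Measure Ω).real (U ⁻¹' Set.Ioc a b) := fun a b ha hab hb => by
    rw [measureReal_preimage_Ioc_of_isUniform_Icc (by linarith) hunif ha hab.le hb]
    exact div_pos (by linarith) (by linarith)
  refine ⟨by simp only [hM', stumpContrast_self, integral_zero], fun d hd hne => ?_⟩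
  rcases hne.lt_or_gt with hlt | hgt
  · simp only [hM', stumpContrast_of_lt hlt, integral_neg,
      hind.integral_indicator_comp_mul_const_add hU hint hmean measurableSet_Ioc]
    nlinarith [hprob d d0 hd.1 hlt hd0.2]
  · simp only [hM', stumpContrast_of_gt hgt,
      hind.integral_indicator_comp_mul_const_add hU hint hmean measurableSet_Ioc]
    nlinarith [hprob d0 d hd0.1 hgt hd.2]

/-- Identifiability of the change point in the stump model: with `U ~ Uniform[t−h, t+h]`,
`ε` integrable, centered and independent of `U`, `α₀ < c < β₀`, and
`W = α₀ 1(U ≤ d⁰) + β₀ 1(U > d⁰) + ε`, the population criterion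
`M(d) = E[(W − c)(1(U ≤ d) − 1(U ≤ d⁰))]` vanishes at `d⁰` and is strictly positive at every
other `d ∈ [t−h, t+h]`; that is, `d⁰` is the unique minimizer of `M` on `[t−h, t+h]`. -/
theorem stump_population_criterion_unique_minimizer
    {Ω : Type*} [MeasureSpace Ω] [IsProbabilityMeasure (ℙ : Measure Ω)]
    (h t : ℝ) (hh : 0 < h)
    (U ε : Ω → ℝ) (hU : Measurable U) (hε : Measurable ε)
    (hunif : MeasureTheory.pdf.IsUniform U (Set.Icc (t - h) (t + h)) ℙ)
    (hint : Integrable ε ℙ) (hmean : ∫ ω, ε ω = 0)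
    (hind : IndepFun U ε ℙ)
    (α₀ β₀ c d0 : ℝ) (hαc : α₀ < c) (hcβ : c < β₀)
    (hd0 : d0 ∈ Set.Icc (t - h) (t + h))
    (M : ℝ → ℝ)
    (hM : ∀ d : ℝ, M d =
      ∫ ω, ((α₀ * (if U ω ≤ d0 then (1 : ℝ) else 0)
          + β₀ * (if d0 < U ω then (1 : ℝ) else 0) + ε ω) - c)
        * ((if U ω ≤ d then (1 : ℝ) else 0) - (if U ω ≤ d0 then (1 : ℝ) else 0))) :
    M d0 = 0 ∧ ∀ d ∈ Set.Icc (t - h) (t + h), d ≠ d0 → 0 < M d :=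
  stump_population_criterion_unique_minimizer_general h t hh U ε hU hunif hint hmean hind α₀ β₀ c d0
    hαc hcβ hd0 M hM
end

section
/- Let h > 0, t ∈ ℝ, c ∈ ℝ, H > 0, and let (U_1, W_1), …, (U_n, W_n) be i.i.d. pairs of real random variables such that U_1 is uniformly distributed on [t − h, t + h] and E[ |W_1 − c| | U_1 ] ≤ H almost surely. Let t − h ≤ a < b < e ≤ t + h. Then E[ | Σ_{i=1}^n (W_i − c) 1(a < U_i ≤ b) | · | Σ_{i=1}^n (W_i − c) 1(b < U_i ≤ e) | ] ≤ n² H² (b − a)(e − b) / (4h²) ≤ n² H² (e − a)² / (4h²). -/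
/-!
Bounding each absolute sum by the sum of absolute values, the product is dominated by
`∑ i, ∑ j, Xᵢ Yⱼ` with `Xᵢ = |Wᵢ - c| 1(a < Uᵢ ≤ b)` and `Yⱼ = |Wⱼ - c| 1(b < Uⱼ ≤ e)`.
The diagonal terms vanish because `(a, b]` and `(b, e]` are disjoint, the others factor by
independence, and conditioning on `U` gives `E Xᵢ ≤ H P(a < U ≤ b) = H (b - a) / (2h)`,
and likewise for `Yⱼ`. The second inequality is `(b - a)(e - b) ≤ (e - a)²`.
-/

open MeasureTheory ProbabilityTheory

section IndepProducts

open Finset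

variable {Ω β ι : Type*} [MeasurableSpace Ω] [MeasurableSpace β] {μ : Measure Ω}
  {Z : ι → Ω → β} {f g : β → ℝ}

theorem integrable_comp_mul_comp_of_iIndepFun (hind : iIndepFun Z μ) (hf : Measurable f)
    (hg : Measurable g) (hfg : ∀ x, f x * g x = 0) {i j : ι}
    (hfi : Integrable (fun ω => f (Z i ω)) μ) (hgj : Integrable (fun ω => g (Z j ω)) μ) :
    Integrable (fun ω => f (Z i ω) * g (Z j ω)) μ := by
  obtain rfl | hij := eq_or_ne i j
  · simp only [hfg]
    exact integrable_zero _ _ _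
  · exact ((hind.indepFun hij).comp hf hg).integrable_mul hfi hgj

variable [Fintype ι]

theorem integrable_sum_mul_sum_of_iIndepFun (hind : iIndepFun Z μ) (hf : Measurable f)
    (hg : Measurable g) (hfg : ∀ x, f x * g x = 0)
    (hfi : ∀ i, Integrable (fun ω => f (Z i ω)) μ)
    (hgi : ∀ i, Integrable (fun ω => g (Z i ω)) μ) :
    Integrable (fun ω => (∑ i, f (Z i ω)) * ∑ j, g (Z j ω)) μ := by
  simp only [sum_mul_sum]
  exact integrable_finsetSum _ fun i _ => integrable_finsetSum _ fun j _ =>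
    integrable_comp_mul_comp_of_iIndepFun hind hf hg hfg (hfi i) (hgi j)

theorem integral_sum_mul_sum_le_of_iIndepFun (hind : iIndepFun Z μ) (hf : Measurable f)
    (hg : Measurable g) (hfg : ∀ x, f x * g x = 0)
    (hfi : ∀ i, Integrable (fun ω => f (Z i ω)) μ)
    (hgi : ∀ i, Integrable (fun ω => g (Z i ω)) μ) (hf₀ : 0 ≤ f) (hg₀ : 0 ≤ g) {A B : ℝ}
    (hA : ∀ i, ∫ ω, f (Z i ω) ∂μ ≤ A) (hB : ∀ i, ∫ ω, g (Z i ω) ∂μ ≤ B) :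
    ∫ ω, (∑ i, f (Z i ω)) * ∑ j, g (Z j ω) ∂μ ≤ Fintype.card ι ^ 2 * (A * B) := by
  have hA₀ (i : ι) : 0 ≤ A := (integral_nonneg fun ω => hf₀ (Z i ω)).trans (hA i)
  have hB₀ (i : ι) : 0 ≤ B := (integral_nonneg fun ω => hg₀ (Z i ω)).trans (hB i)
  have hint (i j : ι) : Integrable (fun ω => f (Z i ω) * g (Z j ω)) μ :=
    integrable_comp_mul_comp_of_iIndepFun hind hf hg hfg (hfi i) (hgi j)
  have hterm (i j : ι) : ∫ ω, f (Z i ω) * g (Z j ω) ∂μ ≤ A * B := by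
    obtain rfl | hij := eq_or_ne i j
    · simp only [hfg, integral_zero]
      exact mul_nonneg (hA₀ i) (hB₀ i)
    · have hXY : IndepFun (fun ω => f (Z i ω)) (fun ω => g (Z j ω)) μ :=
        (hind.indepFun hij).comp hf hg
      rw [hXY.integral_fun_mul_eq_mul_integral (hfi i).1 (hgi j).1]
      exact mul_le_mul (hA i) (hB j) (integral_nonneg fun ω => hg₀ (Z j ω)) (hA₀ i)
  calc ∫ ω, (∑ i, f (Z i ω)) * ∑ j, g (Z j ω) ∂μ
      = ∑ i, ∑ j, ∫ ω, f (Z i ω) * g (Z j ω) ∂μ := by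
        simp only [sum_mul_sum]
        rw [integral_finsetSum _ fun i _ => integrable_finsetSum _ fun j _ => hint i j]
        exact sum_congr rfl fun i _ => integral_finsetSum _ fun j _ => hint i j
    _ ≤ ∑ _i : ι, ∑ _j : ι, A * B := sum_le_sum fun i _ => sum_le_sum fun j _ => hterm i j
    _ = Fintype.card ι ^ 2 * (A * B) := by simp [sq, mul_assoc]

end IndepProducts

theorem setIntegral_le_of_condExp_le {Ω : Type*} {m mΩ : MeasurableSpace Ω} {μ : Measure Ω}
    [IsFiniteMeasure μ] (hm : m ≤ mΩ) {X : Ω → ℝ} (hX : Integrable X μ) {H : ℝ}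
    (hle : ∀ᵐ ω ∂μ, μ[X | m] ω ≤ H) {s : Set Ω} (hs : MeasurableSet[m] s) :
    ∫ ω in s, X ω ∂μ ≤ μ.real s * H := by
  rw [← setIntegral_condExp hm hX hs, ← smul_eq_mul, ← setIntegral_const]
  exact setIntegral_mono_ae integrable_condExp.integrableOn (integrable_const H).integrableOn hle

theorem MeasureTheory.pdf.IsUniform.measureReal_preimage_Ioc_s10 {Ω : Type*} [MeasurableSpace Ω]
    {μ : Measure Ω} {U : Ω → ℝ} {lo hi p q : ℝ} (hu : pdf.IsUniform U (Set.Icc lo hi) μ)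
    (hlt : lo < hi) (hp : lo ≤ p) (hpq : p ≤ q) (hq : q ≤ hi) :
    μ.real (U ⁻¹' Set.Ioc p q) = (q - p) / (hi - lo) := by
  have hsub : Set.Ioc p q ⊆ Set.Icc lo hi :=
    Set.Ioc_subset_Icc_self.trans (Set.Icc_subset_Icc hp hq)
  rw [measureReal_def, hu.measure_preimage (by simp [hlt]) (by simp) measurableSet_Ioc,
    Set.inter_eq_self_of_subset_right hsub, Real.volume_Ioc, Real.volume_Icc, ENNReal.toReal_div,
    ENNReal.toReal_ofReal (by linarith), ENNReal.toReal_ofReal (by linarith)]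

noncomputable def absDevOn (c p q : ℝ) : ℝ × ℝ → ℝ :=
  (Prod.fst ⁻¹' Set.Ioc p q).indicator fun x => |x.2 - c|

section absDevOn

variable {c p q : ℝ}

theorem measurable_absDevOn : Measurable (absDevOn c p q) :=
  (measurable_snd.sub_const c).abs.indicator (measurable_fst measurableSet_Ioc)

theorem absDevOn_nonneg : 0 ≤ absDevOn c p q :=
  Set.indicator_nonneg fun _ _ => abs_nonneg _

theorem absDevOn_mul_absDevOn_eq_zero (a b e : ℝ) (x : ℝ × ℝ) :
    absDevOn c a b x * absDevOn c b e x = 0 := by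
  by_cases hx : x.1 ≤ b <;>
    simp [absDevOn, hx, not_lt.mpr]

theorem abs_mul_ite_eq_absDevOn (x : ℝ × ℝ) :
    |(x.2 - c) * if p < x.1 ∧ x.1 ≤ q then (1 : ℝ) else 0| = absDevOn c p q x := by
  by_cases hx : p < x.1 ∧ x.1 ≤ q <;> simp [absDevOn, hx]

theorem integrable_absDevOn_comp {Ω : Type*} [MeasurableSpace Ω] {μ : Measure Ω}
    {Z : Ω → ℝ × ℝ} (hZ : Measurable Z) (hint : Integrable (fun ω => |(Z ω).2 - c|) μ) :
    Integrable (fun ω => absDevOn c p q (Z ω)) μ :=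
  hint.indicator (hZ.fst measurableSet_Ioc)

theorem integral_absDevOn_le {Ω : Type*} [MeasurableSpace Ω] {μ : Measure Ω}
    [IsFiniteMeasure μ] {Z : Ω → ℝ × ℝ} (hZ : Measurable Z) {lo hi H : ℝ}
    (hu : pdf.IsUniform (fun ω => (Z ω).1) (Set.Icc lo hi) μ)
    (hint : Integrable (fun ω => |(Z ω).2 - c|) μ)
    (hcond : ∀ᵐ ω ∂μ, μ[fun ω' => |(Z ω').2 - c| |
      MeasurableSpace.comap (fun ω' => (Z ω').1) inferInstance] ω ≤ H)
    (hlt : lo < hi) (hp : lo ≤ p) (hpq : p ≤ q) (hq : q ≤ hi) :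
    ∫ ω, absDevOn c p q (Z ω) ∂μ ≤ H * ((q - p) / (hi - lo)) := by
  have hs : MeasurableSet[MeasurableSpace.comap (fun ω => (Z ω).1) inferInstance]
      ((fun ω => (Z ω).1) ⁻¹' Set.Ioc p q) := ⟨_, measurableSet_Ioc, rfl⟩
  have hm := hZ.fst.comap_le
  calc ∫ ω, absDevOn c p q (Z ω) ∂μ
        = ∫ ω in (fun ω => (Z ω).1) ⁻¹' Set.Ioc p q, |(Z ω).2 - c| ∂μ :=
        integral_indicator (hm _ hs)
    _ ≤ μ.real ((fun ω => (Z ω).1) ⁻¹' Set.Ioc p q) * H :=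
        setIntegral_le_of_condExp_le hm hint hcond hs
    _ = H * ((q - p) / (hi - lo)) := by
        rw [pdf.IsUniform.measureReal_preimage_Ioc_s10 hu hlt hp hpq hq, mul_comm]

end absDevOn

theorem tightness_increment_product_bound_general
    {Ω : Type*} [MeasureSpace Ω] [IsProbabilityMeasure (ℙ : Measure Ω)]
    (h t c H : ℝ)
    (n : ℕ) (hn : 0 < n)
    (UW : Fin n → Ω → ℝ × ℝ)
    (hmeas : ∀ i, Measurable (UW i))
    (hindep : iIndepFun UW ℙ)
    (hident : ∀ i, Measure.map (UW i) ℙ = Measure.map (UW ⟨0, hn⟩) ℙ)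
    (hunif : MeasureTheory.pdf.IsUniform (fun ω => (UW ⟨0, hn⟩ ω).1)
      (Set.Icc (t - h) (t + h)) ℙ)
    (hint : Integrable (fun ω => |(UW ⟨0, hn⟩ ω).2 - c|) ℙ)
    (hcond : ∀ᵐ ω ∂(ℙ : Measure Ω),
      (ℙ[fun ω' => |(UW ⟨0, hn⟩ ω').2 - c| |
        MeasurableSpace.comap (fun ω' => (UW ⟨0, hn⟩ ω').1) inferInstance]) ω ≤ H)
    (a b e : ℝ) (hta : t - h ≤ a) (hab : a < b) (hbe : b < e) (het : e ≤ t + h) :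
    (∫ ω, |∑ i, ((UW i ω).2 - c) * (if a < (UW i ω).1 ∧ (UW i ω).1 ≤ b then (1 : ℝ) else 0)|
        * |∑ i, ((UW i ω).2 - c) * (if b < (UW i ω).1 ∧ (UW i ω).1 ≤ e then (1 : ℝ) else 0)|
      ≤ (n : ℝ) ^ 2 * H ^ 2 * (b - a) * (e - b) / (4 * h ^ 2)) ∧
    (n : ℝ) ^ 2 * H ^ 2 * (b - a) * (e - b) / (4 * h ^ 2)
      ≤ (n : ℝ) ^ 2 * H ^ 2 * (e - a) ^ 2 / (4 * h ^ 2) := by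
  have hidentDistrib (i : Fin n) : IdentDistrib (UW i) (UW ⟨0, hn⟩) :=
    ⟨(hmeas i).aemeasurable, (hmeas _).aemeasurable, hident i⟩
  have hlt : t - h < t + h := by linarith
  have hbound (p q : ℝ) (hp : t - h ≤ p) (hpq : p ≤ q) (hq : q ≤ t + h) (i : Fin n) :
      ∫ ω, absDevOn c p q (UW i ω) ≤ H * ((q - p) / (2 * h)) := by
    rw [show 2 * h = t + h - (t - h) by ring]
    exact ((hidentDistrib i).comp measurable_absDevOn).integral_eq.trans_le
      (integral_absDevOn_le (hmeas _) hunif hint hcond hlt hp hpq hq)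
  have hintegrable (p q : ℝ) (i : Fin n) : Integrable (fun ω => absDevOn c p q (UW i ω)) :=
    ((hidentDistrib i).comp measurable_absDevOn).integrable_iff.2 <|
      integrable_absDevOn_comp (hmeas _) hint
  refine ⟨?_, ?_⟩
  · calc _ ≤ ∫ ω, (∑ i, absDevOn c a b (UW i ω)) * ∑ j, absDevOn c b e (UW j ω) := by
          refine integral_mono_of_nonneg (ae_of_all _ fun ω => by positivity) ?_
            (ae_of_all _ fun ω => ?_)
          · exact integrable_sum_mul_sum_of_iIndepFun hindep measurable_absDevOn
              measurable_absDevOn (absDevOn_mul_absDevOn_eq_zero a b e) (hintegrable a b)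
              (hintegrable b e)
          · simp only [← abs_mul_ite_eq_absDevOn]
            gcongr <;> exact Finset.abs_sum_le_sum_abs _ _
      _ ≤ Fintype.card (Fin n) ^ 2 * (H * ((b - a) / (2 * h)) * (H * ((e - b) / (2 * h)))) :=
          integral_sum_mul_sum_le_of_iIndepFun hindep measurable_absDevOn measurable_absDevOn
            (absDevOn_mul_absDevOn_eq_zero a b e) (hintegrable a b) (hintegrable b e)
            absDevOn_nonneg absDevOn_nonneg (hbound a b hta hab.le (by linarith))
            (hbound b e (by linarith) hbe.le het)
      _ = _ := by
          rw [Fintype.card_fin]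
          field_simp
          ring
  · have : (b - a) * (e - b) ≤ (e - a) ^ 2 := by nlinarith
    rw [mul_assoc _ (b - a)]
    gcongr

/-- Tightness second-moment bound (Billingsley's criterion in the proof of Lemma 3.2):
for i.i.d. pairs `(U_i, W_i)` with `U_1 ~ Uniform[t−h, t+h]` and
`E[|W_1 − c| | U_1] ≤ H` a.s., for `t − h ≤ a < b < e ≤ t + h`,
`E[|∑ (W_i − c)1(a < U_i ≤ b)| · |∑ (W_i − c)1(b < U_i ≤ e)|]
  ≤ n² H² (b−a)(e−b)/(4h²) ≤ n² H² (e−a)²/(4h²)`. -/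
theorem tightness_increment_product_bound
    {Ω : Type*} [MeasureSpace Ω] [IsProbabilityMeasure (ℙ : Measure Ω)]
    (h t c H : ℝ) (hh : 0 < h) (hH : 0 < H)
    (n : ℕ) (hn : 0 < n)
    (UW : Fin n → Ω → ℝ × ℝ)
    (hmeas : ∀ i, Measurable (UW i))
    (hindep : iIndepFun UW ℙ)
    (hident : ∀ i, Measure.map (UW i) ℙ = Measure.map (UW ⟨0, hn⟩) ℙ)
    (hunif : MeasureTheory.pdf.IsUniform (fun ω => (UW ⟨0, hn⟩ ω).1)
      (Set.Icc (t - h) (t + h)) ℙ)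
    (hint : Integrable (fun ω => |(UW ⟨0, hn⟩ ω).2 - c|) ℙ)
    (hcond : ∀ᵐ ω ∂(ℙ : Measure Ω),
      (ℙ[fun ω' => |(UW ⟨0, hn⟩ ω').2 - c| |
        MeasurableSpace.comap (fun ω' => (UW ⟨0, hn⟩ ω').1) inferInstance]) ω ≤ H)
    (a b e : ℝ) (hta : t - h ≤ a) (hab : a < b) (hbe : b < e) (het : e ≤ t + h) :
    (∫ ω, |∑ i, ((UW i ω).2 - c) * (if a < (UW i ω).1 ∧ (UW i ω).1 ≤ b then (1 : ℝ) else 0)|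
        * |∑ i, ((UW i ω).2 - c) * (if b < (UW i ω).1 ∧ (UW i ω).1 ≤ e then (1 : ℝ) else 0)|
      ≤ (n : ℝ) ^ 2 * H ^ 2 * (b - a) * (e - b) / (4 * h ^ 2)) ∧
    (n : ℝ) ^ 2 * H ^ 2 * (b - a) * (e - b) / (4 * h ^ 2)
      ≤ (n : ℝ) ^ 2 * H ^ 2 * (e - a) ^ 2 / (4 * h ^ 2) :=
  tightness_increment_product_bound_general h t c H n hn UW hmeas hindep hident hunif hint hcond a b
    e hta hab hbe het
end
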